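/- (Theorem 1, part (c).) Fix an integer n ≥ 1, σ > 0, α, τ ∈ (0,1) satisfying (C1) τ ≥ α and (C2) τ < 2Φ(−z_{α/2}/2) − α, and λ > 0 with z_{α/2}σ/√n < √λ < (z_{α/2} + z_{τ/2})σ/√n. Set ν_0 = √λ. Then for every θ ∈ [ν_0, ∞), the difference Δ(θ) = CR(θ) − CR_1(θ) satisfies Δ(θ) > −α/2; that is, either Δ(θ) ≥ 0 or −α/2 < Δ(θ) < 0. -/

import Mathlib

/-!
Measured in units of `σ/√n`, each of `CR_a` and `CR_b` is, away from its first branch, the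
clipped difference `min (Φ(x - ν)) (Φ r) - Φ(-r)`, so for `θ ≥ √λ` both coverage
probabilities become explicit ratios of `Φ`-values. The only Gaussian input beyond monotonicity
and symmetry is the log-concavity of the tail `c ↦ Φ(-c)`: (C1) and (C2) give
`2Φ(-z_{α/2}) < Φ(-z_{α/2}/2)`, hence `Φ(-3z_{α/2}/2) < Φ(-z_{α/2})/2`, which makes the
lower-tail part `Φ(-x - z_{τ/2})` of the denominator of `CR` less than `α/2` times its main part.
The bound then follows by comparing the two ratios in three cases, according to whether
`CR_b(θ, ν₁)` and `CR_a(θ, ν₂)` have reached their last branches.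
-/

open MeasureTheory ProbabilityTheory

/-- The standard normal cumulative distribution function. -/
noncomputable def Phi (x : ℝ) : ℝ := (gaussianReal 0 1 (Set.Iic x)).toReal

/-- P_s(θ,ν) = Φ(√n(θ − ν)/σ) + Φ(√n(−θ − ν)/σ). -/
noncomputable def Ps (n : ℕ) (σ θ ν : ℝ) : ℝ :=
  Phi (Real.sqrt n * (θ - ν) / σ) + Phi (Real.sqrt n * (-θ - ν) / σ)

/-- σ̃(θ) = (1 + λ/θ²)⁻¹ σ for θ ≠ 0, with the convention σ̃(0) = 0. -/
noncomputable def sigTilde (lam σ θ : ℝ) : ℝ :=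
  if θ = 0 then 0 else (1 + lam / θ ^ 2)⁻¹ * σ

open Classical in
/-- The piecewise function CR_a(θ,ν); here `za` denotes the quantile z_{α/2}. -/
noncomputable def CRa (n : ℕ) (σ lam za θ ν : ℝ) : ℝ :=
  if θ < |ν - za * sigTilde lam σ θ / Real.sqrt n| then
    (Ps n σ θ ν - 2 * Phi (-(za * sigTilde lam σ θ / σ))) *
      (if ν < za * sigTilde lam σ θ / Real.sqrt n then 1 else 0)
  else if θ ≤ ν + za * sigTilde lam σ θ / Real.sqrt n then
    Phi (za * sigTilde lam σ θ / σ) - Phi (Real.sqrt n * (ν - θ) / σ)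
  else 1 - 2 * Phi (-(za * sigTilde lam σ θ / σ))

open Classical in
/-- The piecewise function CR_b(θ,ν); here `za` denotes the quantile z_{α/2}. -/
noncomputable def CRb (n : ℕ) (σ α za θ ν : ℝ) : ℝ :=
  if θ < |ν - za * σ / Real.sqrt n| then
    (Ps n σ θ ν - α) * (if ν < za * σ / Real.sqrt n then 1 else 0)
  else if θ ≤ ν + za * σ / Real.sqrt n then
    1 - α / 2 - Phi (Real.sqrt n * (ν - θ) / σ)
  else 1 - α

/-- CR₁(θ) = CR_a(θ, ν₀)/P_s(θ, ν₀) with ν₀ = √λ: the conditional coverage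
probability of the asymptotic-based confidence interval. -/
noncomputable def CR1 (n : ℕ) (σ lam za θ : ℝ) : ℝ :=
  CRa n σ lam za θ (Real.sqrt lam) / Ps n σ θ (Real.sqrt lam)

/-- CR(θ) = (CR_b(θ,ν₁) + CR_a(θ,ν₂) − CR_b(θ,ν₂))/P_s(θ,ν₁) with
ν₁ = z_{τ/2}σ/√n and ν₂ = √λ + z_{α/2}σ/√n: the conditional coverage probability
of the two-step confidence interval. Here `za` = z_{α/2} and `zt` = z_{τ/2}. -/
noncomputable def CRtwo (n : ℕ) (σ lam α za zt θ : ℝ) : ℝ :=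
  (CRb n σ α za θ (zt * σ / Real.sqrt n)
    + CRa n σ lam za θ (Real.sqrt lam + za * σ / Real.sqrt n)
    - CRb n σ α za θ (Real.sqrt lam + za * σ / Real.sqrt n))
  / Ps n σ θ (zt * σ / Real.sqrt n)

/-- Δ(θ) = CR(θ) − CR₁(θ). -/
noncomputable def Delta (n : ℕ) (σ lam α za zt θ : ℝ) : ℝ :=
  CRtwo n σ lam α za zt θ - CR1 n σ lam za θ

open Real Set

noncomputable def phi (x : ℝ) : ℝ := gaussianPDFReal 0 1 x

lemma phi_eq (x : ℝ) : phi x = (√(2 * π))⁻¹ * exp (-x ^ 2 / 2) := by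
  simp [phi, gaussianPDFReal]

lemma phi_pos (x : ℝ) : 0 < phi x := gaussianPDFReal_pos 0 1 x one_ne_zero

lemma phi_neg (x : ℝ) : phi (-x) = phi x := by
  simp [phi_eq]

lemma phi_add (c d : ℝ) : phi (c + d) = exp (-(d * c) - d ^ 2 / 2) * phi c := by
  rw [phi_eq, phi_eq, mul_left_comm, ← exp_add]
  ring_nf

lemma continuous_phi : Continuous phi := by
  simp only [funext phi_eq]
  fun_prop

lemma integrable_phi : Integrable phi := integrable_gaussianPDFReal 0 1

lemma Phi_eq_integral (x : ℝ) : Phi x = ∫ t in Iic x, phi t := by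
  rw [Phi, gaussianReal_apply_eq_integral 0 one_ne_zero, ENNReal.toReal_ofReal]
  · rfl
  · exact setIntegral_nonneg measurableSet_Iic fun t _ => (phi_pos t).le

lemma Phi_sub_Phi (x y : ℝ) : Phi y - Phi x = ∫ t in x..y, phi t := by
  rw [Phi_eq_integral, Phi_eq_integral,
    intervalIntegral.integral_Iic_sub_Iic integrable_phi.integrableOn integrable_phi.integrableOn]

lemma Phi_strictMono : StrictMono Phi := fun x y hxy => by
  have := intervalIntegral.intervalIntegral_pos_of_pos integrable_phi.intervalIntegrable
    phi_pos hxy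
  linarith [Phi_sub_Phi x y]

lemma Phi_pos (x : ℝ) : 0 < Phi x := by
  have h := Phi_strictMono (sub_one_lt x)
  have : 0 ≤ Phi (x - 1) := ENNReal.toReal_nonneg
  linarith

lemma Phi_neg (x : ℝ) : Phi (-x) = 1 - Phi x := by
  have h_even : ∫ t in Iic (-x), phi t = ∫ t in Ioi x, phi t := by
    simpa [phi_neg] using integral_comp_neg_Iic (-x) phi
  have h_total := intervalIntegral.integral_Iic_add_Ioi (b := x)
    integrable_phi.integrableOn integrable_phi.integrableOn
  rw [show ∫ t, phi t = 1 from integral_gaussianPDFReal_eq_one 0 one_ne_zero] at h_total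
  rw [Phi_eq_integral, Phi_eq_integral, h_even]
  linarith

lemma Phi_zero : Phi 0 = 1 / 2 := by
  have h := Phi_neg 0
  rw [neg_zero] at h
  linarith

lemma hasDerivAt_Phi (x : ℝ) : HasDerivAt Phi (phi x) x := by
  have h : Phi = fun y => Phi 0 + ∫ t in (0 : ℝ)..y, phi t := by
    funext y
    linarith [Phi_sub_Phi 0 y]
  rw [h]
  exact (intervalIntegral.integral_hasDerivAt_right integrable_phi.intervalIntegrable
    (continuous_phi.stronglyMeasurableAtFilter _ _) continuous_phi.continuousAt).const_add _

-- On `t ≤ -c` the shifted density is `φ (t - d) = exp (d t - d²/2) φ t ≤ exp (-d c - d²/2) φ t`.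
lemma Phi_neg_add_le {d : ℝ} (hd : 0 ≤ d) (c : ℝ) :
    Phi (-(c + d)) ≤ exp (-(d * c) - d ^ 2 / 2) * Phi (-c) := by
  have h_shift : ∫ t in Iic (-(c + d)), phi t = ∫ t in Iic (-c), phi (t - d) := by
    rw [← (measurePreserving_sub_right volume d).setIntegral_preimage_emb
      (measurableEmbedding_subRight d)]
    congr 2
    ext t
    simp only [mem_preimage, mem_Iic]
    constructor <;> intro h <;> linarith
  rw [Phi_eq_integral, Phi_eq_integral, h_shift, ← integral_const_mul]
  refine setIntegral_mono_on (integrable_phi.comp_sub_right d).integrableOn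
    (integrable_phi.const_mul _).integrableOn measurableSet_Iic fun t ht => ?_
  rw [show t - d = -(-t + d) by ring, phi_neg, phi_add, phi_neg]
  have : d * t ≤ -(d * c) := by nlinarith [mem_Iic.1 ht]
  exact mul_le_mul_of_nonneg_right (exp_le_exp.2 (by linarith)) (phi_pos t).le

/-- Log-concavity of the Gaussian tail `c ↦ Φ(-c)`. -/
lemma antitone_Phi_neg_add_div_Phi_neg {d : ℝ} (hd : 0 ≤ d) :
    Antitone fun c => Phi (-(c + d)) / Phi (-c) := by
  have h_deriv : ∀ c, HasDerivAt (fun c => Phi (-(c + d)) / Phi (-c))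
      ((-phi (-(c + d)) * Phi (-c) - Phi (-(c + d)) * -phi (-c)) / Phi (-c) ^ 2) c := by
    intro c
    have h_num := (hasDerivAt_Phi (-(c + d))).comp c ((hasDerivAt_id c).add_const d).neg
    have h_den := (hasDerivAt_Phi (-c)).comp c (hasDerivAt_neg c)
    simp only [Function.comp_def, id, mul_neg, mul_one] at h_num h_den
    exact h_num.div h_den (Phi_pos _).ne'
  refine antitone_of_deriv_nonpos (fun c => (h_deriv c).differentiableAt) fun c => ?_
  rw [(h_deriv c).deriv, phi_neg, phi_neg, phi_add]
  refine div_nonpos_of_nonpos_of_nonneg ?_ (sq_nonneg _)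
  nlinarith [Phi_neg_add_le hd c, phi_pos c, Phi_pos (-c)]

lemma Phi_neg_three_halves_lt {a : ℝ} (ha : 0 ≤ a) (h : 2 * Phi (-a) < Phi (-(a / 2))) :
    Phi (-(3 * a / 2)) < Phi (-a) / 2 := by
  have h_ratio := antitone_Phi_neg_add_div_Phi_neg (by linarith : (0:ℝ) ≤ a / 2) (half_le_self ha)
  simp only [add_halves, show a + a / 2 = 3 * a / 2 by ring] at h_ratio
  have h_half : Phi (-a) / Phi (-(a / 2)) < 1 / 2 := by
    rw [div_lt_iff₀ (Phi_pos _)]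
    linarith
  have := (div_lt_iff₀ (Phi_pos (-a))).1 (h_ratio.trans_lt h_half)
  linarith

/-- `CR_a` and `CR_b` in units of `σ/√n`, with half-width `r` standing for `z_{α/2}σ̃(θ)/σ`
resp. `z_{α/2}` (see `CRa_eq_coverage`, `CRb_eq_coverage`). -/
noncomputable def coverage (r x ν : ℝ) : ℝ :=
  if x < |ν - r| then (Phi (x - ν) + Phi (-x - ν) - 2 * Phi (-r)) * (if ν < r then 1 else 0)
  else if x ≤ ν + r then Phi r - Phi (ν - x)
  else 1 - 2 * Phi (-r)

lemma coverage_div {s : ℝ} (hs : 0 < s) (R θ ν : ℝ) :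
    coverage (R / s) (θ / s) (ν / s) =
      if θ < |ν - R| then
        (Phi ((θ - ν) / s) + Phi ((-θ - ν) / s) - 2 * Phi (-(R / s))) * (if ν < R then 1 else 0)
      else if θ ≤ ν + R then Phi (R / s) - Phi ((ν - θ) / s)
      else 1 - 2 * Phi (-(R / s)) := by
  simp only [coverage, ← sub_div, ← add_div, abs_div, abs_of_pos hs,
    div_lt_div_iff_of_pos_right hs, div_le_div_iff_of_pos_right hs]
  ring_nf

lemma sqrt_mul_div_eq_div (n : ℕ) (σ E : ℝ) : √n * E / σ = E / (σ / √n) := by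
  rw [div_div_eq_mul_div, mul_comm]

lemma Ps_eq_scaled (n : ℕ) (σ θ ν : ℝ) :
    Ps n σ θ ν = Phi (θ / (σ / √n) - ν / (σ / √n)) + Phi (-(θ / (σ / √n)) - ν / (σ / √n)) := by
  simp only [Ps, sqrt_mul_div_eq_div, sub_div, neg_div]

lemma div_sqrt_div_eq_div {n : ℕ} {σ : ℝ} (hs : 0 < σ / √n) (y : ℝ) :
    y / √n / (σ / √n) = y / σ := by
  have hn : √n ≠ 0 := fun h => by simp [h] at hs
  have hσ : σ ≠ 0 := fun h => by simp [h] at hs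
  field_simp

lemma CRa_eq_coverage {n : ℕ} {σ : ℝ} (hs : 0 < σ / √n) (lam za θ ν : ℝ) :
    CRa n σ lam za θ ν = coverage (za * sigTilde lam σ θ / σ) (θ / (σ / √n)) (ν / (σ / √n)) := by
  rw [← div_sqrt_div_eq_div hs, coverage_div hs, div_sqrt_div_eq_div hs]
  simp only [CRa, Ps, sqrt_mul_div_eq_div]

lemma CRb_eq_coverage {n : ℕ} {σ α za : ℝ} (hs : 0 < σ / √n) (hza : Phi (-za) = α / 2) (θ ν : ℝ) :
    CRb n σ α za θ ν = coverage za (θ / (σ / √n)) (ν / (σ / √n)) := by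
  have hPza : Phi za = 1 - α / 2 := by rw [← neg_neg za, Phi_neg, hza]
  have hr : za * σ / √n / (σ / √n) = za := by rw [mul_div_assoc, mul_div_cancel_right₀ _ hs.ne']
  rw [← hr, coverage_div hs, hr, hza, hPza, show 2 * (α / 2) = α by ring]
  simp only [CRb, Ps, sqrt_mul_div_eq_div]

lemma coverage_eq_min_of_abs_le {r x ν : ℝ} (h : |ν - r| ≤ x) :
    coverage r x ν = min (Phi (x - ν)) (Phi r) - Phi (-r) := by
  rw [coverage, if_neg h.not_gt]
  split_ifs with hx
  · rw [min_eq_left (Phi_strictMono.monotone (by linarith)), show ν - x = -(x - ν) by ring,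
      Phi_neg, Phi_neg]
    ring
  · rw [min_eq_right (Phi_strictMono.monotone (by linarith)), Phi_neg]
    ring

lemma coverage_eq_max_of_le {r x ν : ℝ} (hr : 0 ≤ r) (h : r ≤ ν) :
    coverage r x ν = max 0 (min (Phi (x - ν)) (Phi r) - Phi (-r)) := by
  have h_abs : |ν - r| = ν - r := abs_of_nonneg (sub_nonneg.2 h)
  rcases lt_or_ge x |ν - r| with hx | hx
  · have : Phi (x - ν) < Phi (-r) := Phi_strictMono (by linarith)
    rw [coverage, if_pos hx, if_neg h.not_gt, mul_zero, max_eq_left]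
    linarith [min_le_left (Phi (x - ν)) (Phi r)]
  · rw [coverage_eq_min_of_abs_le hx, max_eq_right (sub_nonneg.2 (le_min ?_ ?_))]
    exacts [Phi_strictMono.monotone (by linarith), Phi_strictMono.monotone (by linarith)]

/-- `Δ(θ)` in units of `σ/√n`: `μ = √λ/(σ/√n)`, `x = θ/(σ/√n)` and `r = z_{α/2}σ̃(θ)/σ`. -/
noncomputable def scaledDelta (za zt r μ x : ℝ) : ℝ :=
  (coverage za x zt + coverage r x (μ + za) - coverage za x (μ + za)) /
      (Phi (x - zt) + Phi (-x - zt))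
    - coverage r x μ / (Phi (x - μ) + Phi (-x - μ))

lemma Delta_eq_scaledDelta {n : ℕ} {σ lam α za : ℝ} (hs : 0 < σ / √n)
    (hza : Phi (-za) = α / 2) (zt θ : ℝ) :
    Delta n σ lam α za zt θ =
      scaledDelta za zt (za * sigTilde lam σ θ / σ) (√lam / (σ / √n)) (θ / (σ / √n)) := by
  have h_ν₁ : zt * σ / √n / (σ / √n) = zt := by
    rw [mul_div_assoc, mul_div_cancel_right₀ _ hs.ne']
  have h_ν₂ : (√lam + za * σ / √n) / (σ / √n) = √lam / (σ / √n) + za := by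
    rw [add_div, mul_div_assoc, mul_div_cancel_right₀ _ hs.ne']
  simp only [Delta, CRtwo, CR1, CRa_eq_coverage hs, CRb_eq_coverage hs hza, Ps_eq_scaled, h_ν₁,
    h_ν₂, scaledDelta]

lemma min_sub_div_add_le {q F Fm : ℝ} (hq : 0 ≤ q) (hq' : q < 1 / 2) (hF : 1 / 2 ≤ F)
    (hFm : 0 ≤ Fm) :
    (min F (1 - q) - q) / (F + Fm) ≤ 1 - q / F ∧
      (min F (1 - q) - q) / (F + Fm) ≤ (1 - 2 * q) / (1 - q) := by
  have h_drop : (min F (1 - q) - q) / (F + Fm) ≤ (min F (1 - q) - q) / F :=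
    div_le_div_of_nonneg_left (by rw [sub_nonneg, le_min_iff]; constructor <;> linarith)
      (by linarith) (by linarith)
  constructor
  · calc (min F (1 - q) - q) / (F + Fm) ≤ (F - q) / F :=
          h_drop.trans (div_le_div_of_nonneg_right (by linarith [min_le_left F (1 - q)])
            (by linarith))
      _ = 1 - q / F := by field_simp
  · refine h_drop.trans ?_
    rcases le_total F (1 - q) with hF1 | hF1
    · rw [min_eq_left hF1, div_le_div_iff₀ (by linarith) (by linarith)]
      nlinarith
    · rw [min_eq_right hF1, show 1 - q - q = 1 - 2 * q by ring]
      exact div_le_div_of_nonneg_left (by linarith) (by linarith) hF1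

lemma neg_lt_delta_of_closed_form {A q w wp F Fm G : ℝ} (hA : 0 < A) (hAq : A ≤ q)
    (hq : q < 1 / 2) (hF : 1 / 2 ≤ F) (hFw : F ≤ w) (hwp : 0 ≤ wp)
    (hwpA : wp < A * w) (hD : w + wp ≤ 1) (hFm : 0 ≤ Fm) (hG : 1 - q < G → 1 - A < F) :
    -A < (min w (1 - A) - A + max 0 (min G (1 - q) - q) - (min G (1 - A) - A)) / (w + wp)
      - (min F (1 - q) - q) / (F + Fm) := by
  set N := min w (1 - A) - A + max 0 (min G (1 - q) - q) - (min G (1 - A) - A)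
  have hw : 0 < w := by linarith
  obtain ⟨hCR1_F, hCR1_q⟩ := min_sub_div_add_le (by linarith) hq hF hFm
  rcases le_or_gt w (1 - A) with hw1 | hw1
  · have hG1 : G ≤ 1 - q := not_lt.1 fun h => by linarith [hG h]
    have hN : w - q ≤ N := by
      simp only [N, min_eq_left hw1, min_eq_left hG1,
        min_eq_left (hG1.trans (by linarith : 1 - q ≤ 1 - A))]
      linarith [le_max_right 0 (G - q)]
    have hCR : (w - q) / (w + wp) ≤ N / (w + wp) := by gcongr
    have h_gap : 1 - q / w - wp / w ≤ (w - q) / (w + wp) := by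
      rw [show 1 - q / w - wp / w = (w - q - wp) / w by field_simp,
        div_le_div_iff₀ hw (by linarith)]
      nlinarith
    have hqF : q / w ≤ q / F := div_le_div_of_nonneg_left (by linarith) (by linarith) hFw
    have hwp_div : wp / w < A := (div_lt_iff₀ hw).2 (by linarith)
    linarith
  have hCR (hN : 0 ≤ N) : N ≤ N / (w + wp) := le_div_self hN (by linarith) hD
  rcases le_or_gt G (1 - q) with hG1 | hG1
  · have hN : 1 - A - q ≤ N := by
      simp only [N, min_eq_right hw1.le, min_eq_left hG1,
        min_eq_left (hG1.trans (by linarith : 1 - q ≤ 1 - A))]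
      linarith [le_max_right 0 (G - q)]
    have h_gap : 1 - q - (1 - 2 * q) / (1 - q) = q ^ 2 / (1 - q) := by
      field_simp
      ring
    have h_gap_pos : 0 < q ^ 2 / (1 - q) := div_pos (by nlinarith) (by linarith)
    linarith [hCR (by linarith)]
  · have hF1 := hG hG1
    have hN : 1 - 2 * q ≤ N := by
      simp only [N, min_eq_right hw1.le, min_eq_right hG1.le]
      linarith [le_max_right 0 (1 - q - q), min_le_right G (1 - A)]
    have hCR1 : (min F (1 - q) - q) / (F + Fm) ≤ (1 - 2 * q) / (1 - A) := by
      rw [min_eq_right (by linarith), show 1 - q - q = 1 - 2 * q by ring]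
      exact div_le_div_of_nonneg_left (by linarith) (by linarith) (by linarith)
    have h_gap : (1 - 2 * q) / (1 - A) < 1 - 2 * q + A := by
      rw [div_lt_iff₀ (by linarith)]
      nlinarith
    linarith [hCR (by linarith)]

lemma neg_Phi_neg_lt_scaledDelta {za zt r μ x : ℝ} (hzt_lo : za / 2 < zt) (hzt_hi : zt ≤ za)
    (hr_lo : za / 2 ≤ r) (hr_hi : r ≤ za) (hμ : za < μ) (hx : μ ≤ x)
    (h_tail : 2 * Phi (-za) < Phi (-(za / 2))) :
    -Phi (-za) < scaledDelta za zt r μ x := by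
  have hmono := Phi_strictMono.monotone
  have h_compl (y : ℝ) : Phi y = 1 - Phi (-y) := by rw [Phi_neg]; ring
  rw [scaledDelta, coverage_eq_min_of_abs_le (abs_le.2 ⟨by linarith, by linarith⟩),
    coverage_eq_max_of_le (by linarith) (by linarith),
    coverage_eq_min_of_abs_le (by rwa [add_sub_cancel_right, abs_of_pos (by linarith)]),
    coverage_eq_min_of_abs_le (abs_le.2 ⟨by linarith, by linarith⟩), h_compl za, h_compl r]
  have h_half : 1 / 2 ≤ Phi (x - μ) := Phi_zero ▸ hmono (by linarith)
  have h_w : Phi (x - μ) ≤ Phi (x - zt) := hmono (by linarith)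
  refine neg_lt_delta_of_closed_form (Phi_pos _) (hmono (by linarith))
    (Phi_zero ▸ Phi_strictMono (by linarith)) h_half h_w (Phi_pos _).le
    ?_ ?_ (Phi_pos _).le fun h => ?_
  · calc Phi (-x - zt) < Phi (-(3 * za / 2)) := Phi_strictMono (by linarith)
      _ < Phi (-za) / 2 := Phi_neg_three_halves_lt (by linarith) h_tail
      _ ≤ Phi (-za) * Phi (x - zt) := by nlinarith [Phi_pos (-za)]
  · have : Phi (-x - zt) ≤ Phi (-(x - zt)) := hmono (by linarith)
    linarith [Phi_neg (x - zt)]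
  · rw [← h_compl] at h ⊢
    have : r < x - (μ + za) := Phi_strictMono.lt_iff_lt.1 h
    exact Phi_strictMono (by linarith)

lemma mul_sigTilde_div_mem_Icc {lam σ θ za : ℝ} (hσ : 0 < σ) (hlam : 0 < lam) (hθ : √lam ≤ θ)
    (hza : 0 ≤ za) : za * sigTilde lam σ θ / σ ∈ Set.Icc (za / 2) za := by
  have hθ_pos : 0 < θ := (Real.sqrt_pos.2 hlam).trans_le hθ
  have h_ratio : lam / θ ^ 2 ≤ 1 := by
    rw [div_le_one (by positivity), ← Real.sq_sqrt hlam.le]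
    exact pow_le_pow_left₀ (Real.sqrt_nonneg _) hθ 2
  have h_pos : 0 < lam / θ ^ 2 := by positivity
  have h_inv : 1 / 2 ≤ (1 + lam / θ ^ 2)⁻¹ ∧ (1 + lam / θ ^ 2)⁻¹ ≤ 1 := by
    constructor
    · rw [one_div]
      exact inv_anti₀ (by positivity) (by linarith)
    · exact inv_le_one_of_one_le₀ (by linarith)
  rw [sigTilde, if_neg hθ_pos.ne', mul_div_assoc, mul_div_cancel_right₀ _ hσ.ne']
  constructor <;> nlinarith

lemma mem_Ioc_of_quantile_conditions {α τ za zt : ℝ} (hza : Phi (-za) = α / 2)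
    (hzt : Phi (-zt) = τ / 2) (hC1 : α ≤ τ) (hC2 : τ < 2 * Phi (-(za / 2)) - α) :
    zt ∈ Set.Ioc (za / 2) za := by
  have hα : 0 < α := by linarith [Phi_pos (-za)]
  constructor
  · have : -zt < -(za / 2) := Phi_strictMono.lt_iff_lt.1 (by linarith)
    linarith
  · have : -za ≤ -zt := Phi_strictMono.le_iff_le.1 (by linarith)
    linarith

theorem theorem1_part_c_general (n : ℕ) (hn : 1 ≤ n) (σ lam α τ za zt : ℝ)
    (hσ : 0 < σ) (hlam : 0 < lam)
    (hza : Phi (-za) = α / 2) (hzt : Phi (-zt) = τ / 2)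
    (hC1 : α ≤ τ) (hC2 : τ < 2 * Phi (-(za / 2)) - α)
    (hlamLB : za * σ / Real.sqrt n < Real.sqrt lam) :
    ∀ θ ∈ Set.Ici (Real.sqrt lam), -(α / 2) < Delta n σ lam α za zt θ := by
  intro θ hθ
  have hs : 0 < σ / √n := div_pos hσ (Real.sqrt_pos.2 (Nat.cast_pos.2 hn))
  obtain ⟨hzt_lo, hzt_hi⟩ := mem_Ioc_of_quantile_conditions hza hzt hC1 hC2
  obtain ⟨hr_lo, hr_hi⟩ := mul_sigTilde_div_mem_Icc hσ hlam hθ (by linarith : 0 ≤ za)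
  have hμ : za < √lam / (σ / √n) := by rwa [lt_div_iff₀ hs, ← mul_div_assoc]
  rw [Delta_eq_scaledDelta hs hza, ← hza]
  exact neg_Phi_neg_lt_scaledDelta hzt_lo hzt_hi hr_lo hr_hi hμ
    (div_le_div_of_nonneg_right hθ hs.le) (by linarith)

/-- Theorem 1, part (c): under (C1), (C2) and
z_{α/2}σ/√n < √λ < (z_{α/2} + z_{τ/2})σ/√n, for every θ ∈ [ν₀, ∞) (ν₀ = √λ) we have
Δ(θ) > −α/2; that is, either Δ(θ) ≥ 0 or −α/2 < Δ(θ) < 0. -/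
theorem theorem1_part_c (n : ℕ) (hn : 1 ≤ n) (σ lam α τ za zt : ℝ)
    (hσ : 0 < σ) (hlam : 0 < lam)
    (hα : α ∈ Set.Ioo (0:ℝ) 1) (hτ : τ ∈ Set.Ioo (0:ℝ) 1)
    (hza : Phi (-za) = α / 2) (hzt : Phi (-zt) = τ / 2)
    (hC1 : α ≤ τ) (hC2 : τ < 2 * Phi (-(za / 2)) - α)
    (hlamLB : za * σ / Real.sqrt n < Real.sqrt lam)
    (hlamUB : Real.sqrt lam < (za + zt) * σ / Real.sqrt n) :
    ∀ θ ∈ Set.Ici (Real.sqrt lam), -(α / 2) < Delta n σ lam α za zt θ :=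
  theorem1_part_c_general n hn σ lam α τ za zt hσ hlam hza hzt hC1 hC2 hlamLB
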